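/- For p ∈ (0,1) and l ≥ 1, Φ_p(l)^2 ≥ 1 − 2(p/(1-p))^2, where Φ_p(l) = ∏_{k=1}^l (1-p)/(1-p+p^{k+1}). -/

import Mathlib

noncomputable def Phi (p : ℝ) (l : ℕ) : ℝ :=
  ∏ k ∈ Finset.Icc 1 l, (1 - p) / (1 - p + p ^ (k + 1))

/-!
Each factor of `Φ_p(l)` is `(1 + x_k)⁻¹` with `x_k = p^(k+1)/(1-p)`. Since `1 + x ≤ eˣ`,
`Φ_p(l) ≥ exp (-∑ x_k) ≥ 1 - ∑ x_k`, and the geometric series gives `∑ x_k ≤ r²` with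
`r = p/(1-p)`. For `p < 1/2` we have `r < 1`, and squaring `Φ_p(l) ≥ 1 - r² ≥ 0` yields
`Φ_p(l)² ≥ (1 - r²)² ≥ 1 - 2r²`.
-/

open Finset Real

lemma exp_neg_le_inv_one_add {x : ℝ} (hx : -1 < x) : exp (-x) ≤ (1 + x)⁻¹ := by
  rw [exp_neg]
  exact inv_anti₀ (by linarith) (by linarith [add_one_le_exp x])

lemma one_sub_sum_le_prod_inv_one_add {ι : Type*} (s : Finset ι) {x : ι → ℝ}
    (hx : ∀ i ∈ s, 0 ≤ x i) : 1 - ∑ i ∈ s, x i ≤ ∏ i ∈ s, (1 + x i)⁻¹ :=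
  calc 1 - ∑ i ∈ s, x i ≤ exp (-∑ i ∈ s, x i) := one_sub_le_exp_neg _
    _ = ∏ i ∈ s, exp (-x i) := by rw [← sum_neg_distrib, exp_sum]
    _ ≤ ∏ i ∈ s, (1 + x i)⁻¹ :=
      prod_le_prod (fun i _ ↦ (exp_pos _).le)
        fun i hi ↦ exp_neg_le_inv_one_add (by linarith [hx i hi])

lemma Phi_eq_prod_inv_one_add {p : ℝ} (hp : p < 1) (l : ℕ) :
    Phi p l = ∏ k ∈ Icc 1 l, (1 + p ^ (k + 1) / (1 - p))⁻¹ := by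
  refine prod_congr rfl fun k _ ↦ ?_
  have : 1 - p ≠ 0 := by linarith
  field_simp

lemma sum_Icc_pow_succ_le {p : ℝ} (hp : 0 ≤ p) (hp1 : p < 1) (l : ℕ) :
    ∑ k ∈ Icc 1 l, p ^ (k + 1) ≤ p ^ 2 / (1 - p) :=
  calc ∑ k ∈ Icc 1 l, p ^ (k + 1) = p * ∑ k ∈ Ico 1 (l + 1), p ^ k := by
        rw [mul_sum]; exact sum_congr rfl fun k _ ↦ pow_succ' p k
    _ ≤ p * (p ^ 1 / (1 - p)) := mul_le_mul_of_nonneg_left (geom_sum_Ico_le_of_lt_one hp hp1) hp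
    _ = p ^ 2 / (1 - p) := by ring

lemma one_sub_sq_div_le_Phi {p : ℝ} (hp : 0 ≤ p) (hp1 : p < 1) (l : ℕ) :
    1 - (p / (1 - p)) ^ 2 ≤ Phi p l := by
  have h1p : 0 < 1 - p := by linarith
  calc 1 - (p / (1 - p)) ^ 2 = 1 - p ^ 2 / (1 - p) / (1 - p) := by ring
    _ ≤ 1 - ∑ k ∈ Icc 1 l, p ^ (k + 1) / (1 - p) := by
        rw [← sum_div]
        gcongr
        exact sum_Icc_pow_succ_le hp hp1 l
    _ ≤ Phi p l := by
        rw [Phi_eq_prod_inv_one_add hp1]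
        exact one_sub_sum_le_prod_inv_one_add _ fun k _ ↦ by positivity

theorem stmt_12_general (p : ℝ) (hp : 0 < p) (hp1 : p < 1 / 2) (l : ℕ) :
    Phi p l ^ 2 ≥ 1 - 2 * (p / (1 - p)) ^ 2 := by
  set r := p / (1 - p)
  have hr0 : 0 ≤ r := div_nonneg hp.le (by linarith)
  have hr1 : r < 1 := by rw [div_lt_one (by linarith)]; linarith
  have hPhi : 1 - r ^ 2 ≤ Phi p l := one_sub_sq_div_le_Phi hp.le (by linarith) l
  calc 1 - 2 * r ^ 2 ≤ (1 - r ^ 2) ^ 2 := by nlinarith [sq_nonneg (r ^ 2)]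
    _ ≤ Phi p l ^ 2 := pow_le_pow_left₀ (by nlinarith) hPhi 2

theorem stmt_12 (p : ℝ) (hp : 0 < p) (hp1 : p < 1 / 2) (l : ℕ) (hl : 1 ≤ l) :
    Phi p l ^ 2 ≥ 1 - 2 * (p / (1 - p)) ^ 2 :=
  stmt_12_general p hp hp1 l
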